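/- Let a(τ) = τ/(1 + Kτ) with K = 2k₁ + (2+n)k₂ + 1, b(τ) = e^{k₄τ}, and c(τ) = (e^{k₅k₄τ} n k₂ + k₃)·τ with k₅ = 1 + k₃/(n k₂), where k₁, k₂, k₃, k₄ > 0 and n ≥ 1. Then for all τ ∈ [0,1]: (i) a'(τ) + K·a(τ) − b(τ) ≤ 0, (ii) k₄·b(τ) − b'(τ) ≤ 0, and (iii) k₃·a(τ) − c'(τ) + n k₂ b(τ) + k₄ c(τ) ≤ 0. -/

import Mathlib

open Set

/-!
For τ ≥ 0 one has `a' + K a = (1 + Kτ + K²τ²) / (1 + Kτ)² ≤ 1 ≤ b`, and `b' = k₄ b` exactly.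
For (iii), `k₅` is chosen so that `k₅ n k₂ = n k₂ + k₃`; then, with `E = exp (k₅ k₄ τ)`, the left
side equals `k₃ (a - 1) - k₃ k₄ τ (E - 1) + n k₂ (b - E)`, and each term is nonpositive because
`a ≤ 1` (as `K ≥ 1`) and `1 ≤ b ≤ E` (as `k₅ ≥ 1`).
-/

lemma hasDerivAt_div_one_add_mul {K τ : ℝ} (h : 1 + K * τ ≠ 0) :
    HasDerivAt (fun x => x / (1 + K * x)) ((1 + K * τ) ^ 2)⁻¹ τ := by
  have hden : HasDerivAt (fun x => 1 + K * x) K τ := by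
    simpa using ((hasDerivAt_id τ).const_mul K).const_add 1
  exact ((hasDerivAt_id' τ).div hden h).congr_deriv (by ring)

lemma hasDerivAt_exp_const_mul (m τ : ℝ) :
    HasDerivAt (fun x => Real.exp (m * x)) (m * Real.exp (m * τ)) τ := by
  simpa [mul_comm] using ((hasDerivAt_id τ).const_mul m).exp

lemma hasDerivAt_exp_const_mul_add_mul_self (m p q τ : ℝ) :
    HasDerivAt (fun x => (Real.exp (m * x) * p + q) * x)
      (m * (Real.exp (m * τ) * p) * τ + (Real.exp (m * τ) * p + q)) τ :=
  ((((hasDerivAt_exp_const_mul m τ).mul_const p).add_const q).mul (hasDerivAt_id' τ)).congr_deriv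
    (by ring)

lemma inv_sq_one_add_mul_add_mul_div_le_one {K τ : ℝ} (hK : 0 ≤ K) (hτ : 0 ≤ τ) :
    ((1 + K * τ) ^ 2)⁻¹ + K * (τ / (1 + K * τ)) ≤ 1 := by
  have hpos : 0 < 1 + K * τ := by positivity
  rw [← sub_nonneg]
  have key : 1 - (((1 + K * τ) ^ 2)⁻¹ + K * (τ / (1 + K * τ))) = K * τ / (1 + K * τ) ^ 2 := by
    field_simp
    ring
  rw [key]
  positivity

lemma div_one_add_mul_le_one {K τ : ℝ} (hK : 1 ≤ K) (hτ : 0 ≤ τ) : τ / (1 + K * τ) ≤ 1 := by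
  rw [div_le_one (by positivity)]
  nlinarith

lemma inequality_iii_of_bounds {a e E k m p q τ : ℝ} (hm : m * p = k * (p + q)) (ha : a ≤ 1)
    (hE : 1 ≤ E) (he : e ≤ E) (hp : 0 ≤ p) (hq : 0 ≤ q) (hkτ : 0 ≤ k * τ) :
    q * a - (m * (E * p) * τ + (E * p + q)) + p * e + k * ((E * p + q) * τ) ≤ 0 := by
  have h₁ : q * (a - 1) ≤ 0 := mul_nonpos_of_nonneg_of_nonpos hq (by linarith)
  have h₂ : 0 ≤ q * (k * τ) * (E - 1) := by have := sub_nonneg.2 hE; positivity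
  have h₃ : p * (e - E) ≤ 0 := mul_nonpos_of_nonneg_of_nonpos hp (by linarith)
  calc q * a - (m * (E * p) * τ + (E * p + q)) + p * e + k * ((E * p + q) * τ)
      = q * (a - 1) - q * (k * τ) * (E - 1) + p * (e - E) := by linear_combination (-(E * τ)) * hm
    _ ≤ 0 := by linarith

theorem auxiliary_functions_inequalities (n : ℕ) (hn : 1 ≤ n)
    (k₁ k₂ k₃ k₄ : ℝ) (hk₁ : 0 < k₁) (hk₂ : 0 < k₂) (hk₃ : 0 < k₃) (hk₄ : 0 < k₄)
    (K k₅ : ℝ) (hK : K = 2 * k₁ + (2 + n) * k₂ + 1) (hk₅ : k₅ = 1 + k₃ / (n * k₂))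
    (a b c : ℝ → ℝ)
    (ha : a = fun τ => τ / (1 + K * τ))
    (hb : b = fun τ => Real.exp (k₄ * τ))
    (hc : c = fun τ => (Real.exp (k₅ * k₄ * τ) * n * k₂ + k₃) * τ) :
    ∀ τ ∈ Icc (0 : ℝ) 1,
      deriv a τ + K * a τ - b τ ≤ 0 ∧
      k₄ * b τ - deriv b τ ≤ 0 ∧
      k₃ * a τ - deriv c τ + n * k₂ * b τ + k₄ * c τ ≤ 0 := by
  rintro τ ⟨hτ, -⟩
  have hnk₂ : 0 < (n : ℝ) * k₂ := mul_pos (by exact_mod_cast hn) hk₂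
  have hK₁ : 1 ≤ K := by
    have : 0 ≤ (2 + n : ℝ) * k₂ := by positivity
    linarith
  have hk₅_mul : k₅ * k₄ * (n * k₂) = k₄ * (n * k₂ + k₃) := by
    rw [hk₅]; field_simp
  have hk₄τ : 0 ≤ k₄ * τ := by positivity
  have hc' : c = fun τ => (Real.exp (k₅ * k₄ * τ) * (n * k₂) + k₃) * τ := by
    simp only [hc, mul_assoc]
  subst ha hb
  rw [(hasDerivAt_div_one_add_mul (by positivity)).deriv, (hasDerivAt_exp_const_mul k₄ τ).deriv,
    hc', (hasDerivAt_exp_const_mul_add_mul_self _ _ _ τ).deriv]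
  beta_reduce
  refine ⟨?_, by simp, ?_⟩
  · linarith [inv_sq_one_add_mul_add_mul_div_le_one (zero_le_one.trans hK₁) hτ,
      Real.one_le_exp hk₄τ]
  · have hk₅_one : 1 ≤ k₅ := by rw [hk₅]; linarith [div_pos hk₃ hnk₂]
    have hb_le : Real.exp (k₄ * τ) ≤ Real.exp (k₅ * k₄ * τ) :=
      Real.exp_le_exp.2 (by rw [mul_assoc]; exact le_mul_of_one_le_left hk₄τ hk₅_one)
    exact inequality_iii_of_bounds hk₅_mul (div_one_add_mul_le_one hK₁ hτ)
      (Real.one_le_exp (by positivity)) hb_le hnk₂.le hk₃.le hk₄τ
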